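/- arXiv:2001.01154 — 2 statements merged into one kernel-verified Lean document; each statement's English description precedes it below -/
import Mathlib

section
/- Existence of angles under a lower curvature bound (Lemma 3.1, curvature ≥ 0 case). Let X be a metric space, let U ⊆ X be a region of curvature ≥ 0, and let γ : [0,T] → X and η : [0,S] → X be unit-speed geodesics with γ(0) = η(0) whose images are contained in U. Then the angle between γ and η exists, i.e. ∠⁺(γ, η) = ∠⁻(γ, η), and its value equals lim_{t→0⁺} ∠⁰_{γ(0)}(γ(t), η(t)). -/
open Filter Topology Metric Set

noncomputable section

/-- `γ` is a unit-speed geodesic (shortest path) on the interval `[0, T]`: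
the distance between any two of its points equals the parameter difference. -/
def IsUnitSpeedGeodesicOn {X : Type*} [MetricSpace X] (γ : ℝ → X) (T : ℝ) : Prop :=
  ∀ t ∈ Set.Icc (0:ℝ) T, ∀ t' ∈ Set.Icc (0:ℝ) T, dist (γ t) (γ t') = |t - t'|

/-- The Euclidean comparison angle `∠⁰_p(x, y)` at the vertex `p`. -/
def compAngle {X : Type*} [MetricSpace X] (p x y : X) : ℝ :=
  Real.arccos ((dist p x ^ 2 + dist p y ^ 2 - dist x y ^ 2) /
    (2 * dist p x * dist p y))

/-- The upper angle `∠⁺(γ, η)` between two geodesics with `γ 0 = η 0`: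
the limsup of comparison angles `∠⁰_{γ 0}(γ t, η s)` as `(t, s) → (0⁺, 0⁺)`. -/
def upperAngle {X : Type*} [MetricSpace X] (γ η : ℝ → X) : ℝ :=
  Filter.limsup (fun ts : ℝ × ℝ => compAngle (γ 0) (γ ts.1) (η ts.2))
    ((𝓝[>] (0:ℝ)) ×ˢ (𝓝[>] (0:ℝ)))

/-- The lower angle `∠⁻(γ, η)`: liminf of comparison angles. -/
def lowerAngle {X : Type*} [MetricSpace X] (γ η : ℝ → X) : ℝ :=
  Filter.liminf (fun ts : ℝ × ℝ => compAngle (γ 0) (γ ts.1) (η ts.2))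
    ((𝓝[>] (0:ℝ)) ×ˢ (𝓝[>] (0:ℝ)))

/-- `U` is a region of curvature bounded by `0` in the comparison sense, where
`rel` is `≤` (curvature `≤ 0`) or `≥` (curvature `≥ 0`): any two points of `U`
are joined by a unit-speed shortest path with image in `U`, and for every
geodesic triangle contained in `U` and every Euclidean comparison triangle,
distances between pairs of points on the sides are related by `rel` to the
distances between the corresponding comparison points. -/
def IsCurvRegion {X : Type*} [MetricSpace X] (rel : ℝ → ℝ → Prop) (U : Set X) : Prop :=
  (∀ x ∈ U, ∀ y ∈ U, ∃ γ : ℝ → X, IsUnitSpeedGeodesicOn γ (dist x y) ∧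
    γ 0 = x ∧ γ (dist x y) = y ∧ ∀ t ∈ Set.Icc (0:ℝ) (dist x y), γ t ∈ U) ∧
  (∀ x ∈ U, ∀ y ∈ U, ∀ z ∈ U, ∀ p : Fin 3 → ℝ → X,
    (∀ i, IsUnitSpeedGeodesicOn (p i) (![dist x y, dist x z, dist y z] i) ∧
      p i 0 = (![(x, y), (x, z), (y, z)] i).1 ∧
      p i (![dist x y, dist x z, dist y z] i) = (![(x, y), (x, z), (y, z)] i).2 ∧
      ∀ t ∈ Set.Icc (0:ℝ) (![dist x y, dist x z, dist y z] i), p i t ∈ U) →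
    ∀ xb yb zb : EuclideanSpace ℝ (Fin 2),
      dist xb yb = dist x y → dist xb zb = dist x z → dist yb zb = dist y z →
      ∀ i j : Fin 3, ∀ a b : ℝ,
        a ∈ Set.Icc (0:ℝ) (![dist x y, dist x z, dist y z] i) →
        b ∈ Set.Icc (0:ℝ) (![dist x y, dist x z, dist y z] j) →
        rel (dist (p i a) (p j b))
          (dist
            (![fun c : ℝ => AffineMap.lineMap xb yb (c / dist x y),
               fun c : ℝ => AffineMap.lineMap xb zb (c / dist x z),
               fun c : ℝ => AffineMap.lineMap yb zb (c / dist y z)] i a)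
            (![fun c : ℝ => AffineMap.lineMap xb yb (c / dist x y),
               fun c : ℝ => AffineMap.lineMap xb zb (c / dist x z),
               fun c : ℝ => AffineMap.lineMap yb zb (c / dist y z)] j b)))

/-- A region of curvature `≤ 0`. -/
def IsCurvLeRegion {X : Type*} [MetricSpace X] (U : Set X) : Prop :=
  IsCurvRegion (· ≤ ·) U

/-- A region of curvature `≥ 0`. -/
def IsCurvGeRegion {X : Type*} [MetricSpace X] (U : Set X) : Prop :=
  IsCurvRegion (· ≥ ·) U

end

/-!
Comparing the hinge `γ t, η s` with its Euclidean comparison triangle shows that in nonnegative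
curvature the comparison angle `∠⁰_{γ 0}(γ t, η s)` is antitone in each of `t` and `s`. Being
bounded by `π`, it converges to its supremum as `(t, s) → (0⁺, 0⁺)`; hence the upper and lower
angles agree, and the diagonal `t = s` has the same limit.
-/

theorem dist_lineMap_sq {E : Type*} [NormedAddCommGroup E] [InnerProductSpace ℝ E] (x y z : E)
    (r : ℝ) :
    dist (AffineMap.lineMap x y r) z ^ 2 =
      r ^ 2 * dist x y ^ 2 + dist x z ^ 2 - r * (dist x y ^ 2 + dist x z ^ 2 - dist y z ^ 2) := by
  have hyz : y - z = (y - x) - (z - x) := by abel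
  have hu : AffineMap.lineMap x y r - z = r • (y - x) - (z - x) := by
    rw [AffineMap.lineMap_apply_module']; abel
  rw [dist_eq_norm, dist_eq_norm, dist_eq_norm, dist_eq_norm, hyz, hu,
    norm_sub_sq_real (r • (y - x)), norm_sub_sq_real (y - x), norm_smul, real_inner_smul_left,
    norm_sub_rev x y, norm_sub_rev x z, mul_pow, Real.norm_eq_abs, sq_abs]
  ring

theorem exists_euclideanSpace_triangle_of_abs_sub_le {a b c : ℝ} (hc : c ≤ a + b)
    (hc' : |a - b| ≤ c) :
    ∃ xb yb zb : EuclideanSpace ℝ (Fin 2), dist xb yb = a ∧ dist xb zb = b ∧ dist yb zb = c := by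
  have hbc := abs_le.1 hc'
  have ha : 0 ≤ a := by linarith
  have hb : 0 ≤ b := by linarith
  -- the abscissa of the third vertex; for `a = 0` it is the junk value `0`, which still works
  set p := (a ^ 2 + b ^ 2 - c ^ 2) / (2 * a) with hp_def
  have hp : p ^ 2 ≤ b ^ 2 := by
    rcases eq_or_ne a 0 with rfl | ha
    · simp [p, sq_nonneg]
    · have h2a : 0 < 2 * a := by positivity
      apply sq_le_sq' <;> [rw [hp_def, le_div_iff₀ h2a]; rw [hp_def, div_le_iff₀ h2a]] <;>
        nlinarith
  have hcos : a ^ 2 - 2 * a * p + b ^ 2 = c ^ 2 := by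
    rcases eq_or_ne a 0 with rfl | ha
    · obtain rfl : c = b := by linarith
      simp [p]
    · rw [hp_def]; field_simp; ring
  refine ⟨!₂[0, 0], !₂[a, 0], !₂[p, √(b ^ 2 - p ^ 2)], ?_, ?_, ?_⟩ <;>
    simp only [EuclideanSpace.dist_eq, Fin.sum_univ_two, Fin.isValue, Matrix.cons_val_zero,
      Matrix.cons_val_one, Matrix.cons_val_fin_one, dist_zero, dist_self, Real.norm_eq_abs, sq_abs,
      ne_eq, OfNat.ofNat_ne_zero, not_false_eq_true, zero_pow, add_zero]
  · exact Real.sqrt_sq ha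
  · rw [Real.sq_sqrt (sub_nonneg.2 hp), add_sub_cancel, Real.sqrt_sq hb]
  · rw [Real.dist_eq, sq_abs, Real.sq_sqrt (sub_nonneg.2 hp), ← Real.sqrt_sq (by linarith : 0 ≤ c)]
    congr 1
    linear_combination hcos

theorem exists_comparison_triangle {X : Type*} [PseudoMetricSpace X] (x y z : X) :
    ∃ xb yb zb : EuclideanSpace ℝ (Fin 2),
      dist xb yb = dist x y ∧ dist xb zb = dist x z ∧ dist yb zb = dist y z := by
  refine exists_euclideanSpace_triangle_of_abs_sub_le
    ((dist_triangle_left y z x).trans_eq ?_) ?_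
  · rw [dist_comm x y]
  · rw [dist_comm x y, dist_comm x z]
    exact abs_dist_sub_le y z x

namespace IsUnitSpeedGeodesicOn

variable {X : Type*} [MetricSpace X] {γ : ℝ → X} {T : ℝ}

theorem mono (hγ : IsUnitSpeedGeodesicOn γ T) {T' : ℝ} (h : T' ≤ T) :
    IsUnitSpeedGeodesicOn γ T' :=
  fun t ht t' ht' => hγ t ⟨ht.1, ht.2.trans h⟩ t' ⟨ht'.1, ht'.2.trans h⟩

theorem dist_zero_left (hγ : IsUnitSpeedGeodesicOn γ T) {t : ℝ} (ht : t ∈ Icc 0 T) :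
    dist (γ 0) (γ t) = t := by
  rw [hγ 0 ⟨le_rfl, ht.1.trans ht.2⟩ t ht, zero_sub, abs_neg, abs_of_nonneg ht.1]

end IsUnitSpeedGeodesicOn

theorem AntitoneOn.tendsto_nhdsGT_prod_csSup {α : Type*} [ConditionallyCompleteLinearOrder α]
    [TopologicalSpace α] [OrderTopology α] {F : ℝ × ℝ → α} {a b T S : ℝ} (hT : a < T)
    (hS : b < S) (hF : AntitoneOn F (Ioc a T ×ˢ Ioc b S))
    (hbdd : BddAbove (F '' (Ioc a T ×ˢ Ioc b S))) :
    Tendsto F (𝓝[>] a ×ˢ 𝓝[>] b) (𝓝 (sSup (F '' (Ioc a T ×ˢ Ioc b S)))) := by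
  refine tendsto_order.2 ⟨fun c hc => ?_, fun c hc => ?_⟩
  · obtain ⟨_, ⟨⟨t₀, s₀⟩, ⟨ht₀, hs₀⟩, rfl⟩, hc₀⟩ := exists_lt_of_lt_csSup
      ((nonempty_Ioc.2 hT).prod (nonempty_Ioc.2 hS) |>.image F) hc
    filter_upwards [prod_mem_prod (Ioc_mem_nhdsGT ht₀.1) (Ioc_mem_nhdsGT hs₀.1)]
    rintro ⟨t, s⟩ ⟨ht, hs⟩
    exact hc₀.trans_le (hF ⟨⟨ht.1, ht.2.trans ht₀.2⟩, ⟨hs.1, hs.2.trans hs₀.2⟩⟩ ⟨ht₀, hs₀⟩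
      ⟨ht.2, hs.2⟩)
  · filter_upwards [prod_mem_prod (Ioc_mem_nhdsGT hT) (Ioc_mem_nhdsGT hS)] with ts hts
    exact (le_csSup hbdd (mem_image_of_mem F hts)).trans_lt hc

theorem compAngle_comm {X : Type*} [MetricSpace X] (p x y : X) :
    compAngle p x y = compAngle p y x := by
  rw [compAngle, compAngle, dist_comm x y, add_comm (dist p x ^ 2), mul_right_comm]

section Curvature

variable {X : Type*} [MetricSpace X] {U : Set X}

def IsGeodesicIn (U : Set X) (γ : ℝ → X) (x y : X) : Prop :=
  IsUnitSpeedGeodesicOn γ (dist x y) ∧ γ 0 = x ∧ γ (dist x y) = y ∧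
    ∀ t ∈ Icc 0 (dist x y), γ t ∈ U

theorem IsUnitSpeedGeodesicOn.isGeodesicIn {γ : ℝ → X} {T t : ℝ}
    (hγ : IsUnitSpeedGeodesicOn γ T) (hγU : ∀ t ∈ Icc 0 T, γ t ∈ U) (ht : t ∈ Icc 0 T) :
    IsGeodesicIn U γ (γ 0) (γ t) := by
  rw [IsGeodesicIn, hγ.dist_zero_left ht]
  exact ⟨hγ.mono ht.2, rfl, rfl, fun u hu => hγU u ⟨hu.1, hu.2.trans ht.2⟩⟩

theorem IsGeodesicIn.left_mem {γ : ℝ → X} {x y : X} (hγ : IsGeodesicIn U γ x y) : x ∈ U :=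
  hγ.2.1 ▸ hγ.2.2.2 0 ⟨le_rfl, dist_nonneg⟩

theorem IsGeodesicIn.right_mem {γ : ℝ → X} {x y : X} (hγ : IsGeodesicIn U γ x y) : y ∈ U :=
  hγ.2.2.1 ▸ hγ.2.2.2 _ ⟨dist_nonneg, le_rfl⟩

theorem IsCurvGeRegion.dist_lineMap_le (hU : IsCurvGeRegion U) {x y z : X} {p q : ℝ → X}
    (hp : IsGeodesicIn U p x y) (hq : IsGeodesicIn U q x z)
    {xb yb zb : EuclideanSpace ℝ (Fin 2)} (hxy : dist xb yb = dist x y)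
    (hxz : dist xb zb = dist x z) (hyz : dist yb zb = dist y z) {a b : ℝ}
    (ha : a ∈ Icc 0 (dist x y)) (hb : b ∈ Icc 0 (dist x z)) :
    dist (AffineMap.lineMap xb yb (a / dist x y)) (AffineMap.lineMap xb zb (b / dist x z)) ≤
      dist (p a) (q b) := by
  obtain ⟨r, hr⟩ := hU.1 y hp.right_mem z hq.right_mem
  exact hU.2 x hp.left_mem y hp.right_mem z hq.right_mem ![p, q, r]
    (fun i => by fin_cases i <;> assumption) xb yb zb hxy hxz hyz 0 1 a b ha hb

variable {T S : ℝ} {γ η : ℝ → X}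

/-- The left side is the squared distance between the comparison points of `γ t` and `η s` in
the comparison triangle of `γ 0, γ t', η s`. -/
theorem IsCurvGeRegion.comparison_sq_le_dist_sq (hU : IsCurvGeRegion U)
    (hγ : IsUnitSpeedGeodesicOn γ T) (hη : IsUnitSpeedGeodesicOn η S) (hγη : γ 0 = η 0)
    (hγU : ∀ t ∈ Icc 0 T, γ t ∈ U) (hηU : ∀ s ∈ Icc 0 S, η s ∈ U) {t t' s : ℝ}
    (ht : 0 < t) (htt' : t ≤ t') (ht'T : t' ≤ T) (hs : 0 < s) (hsS : s ≤ S) :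
    t ^ 2 + s ^ 2 - t / t' * (t' ^ 2 + s ^ 2 - dist (γ t') (η s) ^ 2) ≤ dist (γ t) (η s) ^ 2 := by
  have ht' : t' ∈ Icc 0 T := ⟨ht.le.trans htt', ht'T⟩
  have hs' : s ∈ Icc 0 S := ⟨hs.le, hsS⟩
  have hxy : dist (γ 0) (γ t') = t' := hγ.dist_zero_left ht'
  have hxz : dist (γ 0) (η s) = s := hγη ▸ hη.dist_zero_left hs'
  have hηs : IsGeodesicIn U η (γ 0) (η s) := hγη ▸ hη.isGeodesicIn hηU hs'
  obtain ⟨xb, yb, zb, hxyb, hxzb, hyzb⟩ := exists_comparison_triangle (γ 0) (γ t') (η s)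
  have key := hU.dist_lineMap_le (hγ.isGeodesicIn hγU ht') hηs hxyb hxzb hyzb
    (a := t) (b := s) (by rw [hxy]; exact ⟨ht.le, htt'⟩) (by rw [hxz]; exact ⟨hs.le, le_rfl⟩)
  rw [hxy, hxz, div_self hs.ne', AffineMap.lineMap_apply_one] at key
  calc t ^ 2 + s ^ 2 - t / t' * (t' ^ 2 + s ^ 2 - dist (γ t') (η s) ^ 2)
      = dist (AffineMap.lineMap xb yb (t / t')) zb ^ 2 := by
        have : t' ≠ 0 := (ht.trans_le htt').ne'
        rw [dist_lineMap_sq, hxyb, hxzb, hyzb, hxy, hxz]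
        field_simp
    _ ≤ dist (γ t) (η s) ^ 2 := pow_le_pow_left₀ dist_nonneg key 2

theorem IsCurvGeRegion.compAngle_le_of_le (hU : IsCurvGeRegion U)
    (hγ : IsUnitSpeedGeodesicOn γ T) (hη : IsUnitSpeedGeodesicOn η S) (hγη : γ 0 = η 0)
    (hγU : ∀ t ∈ Icc 0 T, γ t ∈ U) (hηU : ∀ s ∈ Icc 0 S, η s ∈ U) {t t' s : ℝ}
    (ht : 0 < t) (htt' : t ≤ t') (ht'T : t' ≤ T) (hs : 0 < s) (hsS : s ≤ S) :
    compAngle (γ 0) (γ t') (η s) ≤ compAngle (γ 0) (γ t) (η s) := by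
  have ht' : 0 < t' := ht.trans_le htt'
  have hsq := hU.comparison_sq_le_dist_sq hγ hη hγη hγU hηU ht htt' ht'T hs hsS
  have hxz : dist (γ 0) (η s) = s := hγη ▸ hη.dist_zero_left ⟨hs.le, hsS⟩
  rw [compAngle, compAngle, hγ.dist_zero_left ⟨ht'.le, ht'T⟩,
    hγ.dist_zero_left ⟨ht.le, htt'.trans ht'T⟩, hxz]
  refine Real.arccos_le_arccos ((div_le_div_iff₀ (by positivity) (by positivity)).2 ?_)
  rw [div_mul_eq_mul_div, sub_le_iff_le_add, ← sub_le_iff_le_add', le_div_iff₀ ht'] at hsq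
  nlinarith

theorem IsCurvGeRegion.antitoneOn_compAngle (hU : IsCurvGeRegion U)
    (hγ : IsUnitSpeedGeodesicOn γ T) (hη : IsUnitSpeedGeodesicOn η S) (hγη : γ 0 = η 0)
    (hγU : ∀ t ∈ Icc 0 T, γ t ∈ U) (hηU : ∀ s ∈ Icc 0 S, η s ∈ U) :
    AntitoneOn (fun ts : ℝ × ℝ => compAngle (γ 0) (γ ts.1) (η ts.2)) (Ioc 0 T ×ˢ Ioc 0 S) := by
  rintro ⟨t, s⟩ ⟨ht, hs⟩ ⟨t', s'⟩ ⟨ht', hs'⟩ ⟨htt', hss'⟩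
  calc compAngle (γ 0) (γ t') (η s') ≤ compAngle (γ 0) (γ t) (η s') :=
        hU.compAngle_le_of_le hγ hη hγη hγU hηU ht.1 htt' ht'.2 hs'.1 hs'.2
    _ = compAngle (η 0) (η s') (γ t) := by rw [compAngle_comm, hγη]
    _ ≤ compAngle (η 0) (η s) (γ t) :=
        hU.compAngle_le_of_le hη hγ hγη.symm hηU hγU hs.1 hss' hs'.2 ht.1 ht.2
    _ = compAngle (γ 0) (γ t) (η s) := by rw [compAngle_comm, hγη]

end Curvature

/-- Lemma 3.1, curvature `≥ 0` case: the angle between two geodesics exists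
and equals the limit of the diagonal comparison angles. -/
theorem angle_exists_of_curvGe {X : Type*} [MetricSpace X]
    {U : Set X} (hU : IsCurvGeRegion U)
    {T S : ℝ} (hT : 0 < T) (hS : 0 < S)
    (γ η : ℝ → X)
    (hγ : IsUnitSpeedGeodesicOn γ T) (hη : IsUnitSpeedGeodesicOn η S)
    (hγη : γ 0 = η 0)
    (hγU : ∀ t ∈ Set.Icc (0:ℝ) T, γ t ∈ U)
    (hηU : ∀ s ∈ Set.Icc (0:ℝ) S, η s ∈ U) :
    upperAngle γ η = lowerAngle γ η ∧
    Filter.Tendsto (fun t : ℝ => compAngle (γ 0) (γ t) (η t)) (𝓝[>] (0:ℝ))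
      (𝓝 (upperAngle γ η)) := by
  have hlim := (hU.antitoneOn_compAngle hγ hη hγη hγU hηU).tendsto_nhdsGT_prod_csSup hT hS
    ⟨Real.pi, by rintro _ ⟨_, -, rfl⟩; exact Real.arccos_le_pi _⟩
  have hupper : upperAngle γ η = _ := hlim.limsup_eq
  refine ⟨hupper.trans hlim.liminf_eq.symm, hupper ▸ ?_⟩
  exact (hlim.comp (tendsto_id.prodMk tendsto_id) :)
end

section
/- Angle–comparison-angle inequality, lower curvature bound (Corollary 3.2, curvature ≥ 0 case). Let X be a metric space, let U ⊆ X be a region of curvature ≥ 0, and let γ : [0,T] → X and η : [0,S] → X be unit-speed geodesics with γ(0) = η(0) whose images are contained in U. Then for all t ∈ (0, T] and s ∈ (0, S], ∠⁺(γ, η) ≥ ∠⁰_{γ(0)}(γ(t), η(s)). (By Lemma 3.1 the angle ∠(γ, η) exists and equals ∠⁺(γ, η).) -/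
open Filter Topology Metric Set

/-! Compare the hinge at `γ 0` formed by `γ` on `[0, t]` and `η` on `[0, s]` with a Euclidean
comparison triangle of `γ 0, γ t, η s`. Curvature `≥ 0` says that for `t' ≤ t`, `s' ≤ s` the points
`γ t'`, `η s'` are at least as far apart as the corresponding points of the comparison triangle,
which by the law of cosines means `∠⁰(γ t', η s') ≥ ∠⁰(γ t, η s)`. So the comparison angle only
grows as `(t, s) → (0⁺, 0⁺)`, and its limsup dominates each of its values. -/

lemma dist_lineMap_lineMap_sq {V : Type*} [NormedAddCommGroup V] [InnerProductSpace ℝ V]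
    (p y z : V) (a b : ℝ) :
    dist (AffineMap.lineMap p y a) (AffineMap.lineMap p z b) ^ 2 =
      a ^ 2 * dist p y ^ 2 + b ^ 2 * dist p z ^ 2
        - a * b * (dist p y ^ 2 + dist p z ^ 2 - dist y z ^ 2) := by
  have hyz : dist y z = ‖(y - p) - (z - p)‖ := by rw [dist_eq_norm, sub_sub_sub_cancel_right]
  have hl : dist (AffineMap.lineMap p y a) (AffineMap.lineMap p z b) =
      ‖a • (y - p) - b • (z - p)‖ := by
    rw [dist_eq_norm, AffineMap.lineMap_apply_module', AffineMap.lineMap_apply_module',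
      add_sub_add_right_eq_sub]
  rw [hl, hyz, dist_eq_norm' p y, dist_eq_norm' p z]
  generalize y - p = v, z - p = w
  rw [norm_sub_sq_real, norm_sub_sq_real, norm_smul, norm_smul, real_inner_smul_left,
    real_inner_smul_right, Real.norm_eq_abs, Real.norm_eq_abs, mul_pow, mul_pow, sq_abs, sq_abs]
  ring

lemma exists_euclideanSpace_triangle {a b c : ℝ} (hab : c ≤ a + b) (hac : b ≤ a + c)
    (hbc : a ≤ b + c) :
    ∃ x y z : EuclideanSpace ℝ (Fin 2), dist x y = a ∧ dist x z = b ∧ dist y z = c := by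
  -- `u` is the abscissa of the third vertex given by the law of cosines; for `a = 0` it is the
  -- junk value `0`, which still works because then `b = c`.
  set u := (a ^ 2 + b ^ 2 - c ^ 2) / (2 * a)
  have hu : u ^ 2 ≤ b ^ 2 := by
    rcases eq_or_lt_of_le (show 0 ≤ a by linarith) with ha | ha
    · simp [u, ← ha, sq_nonneg]
    have hN : |a ^ 2 + b ^ 2 - c ^ 2| ≤ 2 * a * b := abs_le.2 ⟨by nlinarith, by nlinarith⟩
    rw [div_pow, div_le_iff₀ (by positivity), ← sq_abs]
    nlinarith [abs_nonneg (a ^ 2 + b ^ 2 - c ^ 2)]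
  have hv : √(b ^ 2 - u ^ 2) ^ 2 = b ^ 2 - u ^ 2 := Real.sq_sqrt (sub_nonneg.2 hu)
  have hcos : 2 * a * u = a ^ 2 + b ^ 2 - c ^ 2 := by
    rcases eq_or_ne a 0 with ha | ha
    · rw [ha]; nlinarith
    · exact mul_div_cancel₀ _ (by positivity)
  refine ⟨0, !₂[a, 0], !₂[u, √(b ^ 2 - u ^ 2)], ?_, ?_, ?_⟩ <;>
    simp only [EuclideanSpace.dist_eq, Fin.sum_univ_two, Real.dist_eq, sq_abs, WithLp.ofLp_zero,
      Pi.zero_apply, Matrix.cons_val_zero, Matrix.cons_val_one] <;>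
    rw [Real.sqrt_eq_iff_eq_sq (by positivity) (by linarith)]
  · ring
  · linear_combination hv
  · linear_combination hv - hcos

section Geodesic

variable {X : Type*} [MetricSpace X] {γ η : ℝ → X}

lemma IsUnitSpeedGeodesicOn.mono_s10 {T T' : ℝ} (hγ : IsUnitSpeedGeodesicOn γ T) (hT : T' ≤ T) :
    IsUnitSpeedGeodesicOn γ T' :=
  fun a ha b hb => hγ a ⟨ha.1, ha.2.trans hT⟩ b ⟨hb.1, hb.2.trans hT⟩

lemma IsUnitSpeedGeodesicOn.dist_zero {T t : ℝ} (hγ : IsUnitSpeedGeodesicOn γ T)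
    (ht : t ∈ Icc 0 T) : dist (γ 0) (γ t) = t := by
  rw [hγ 0 ⟨le_rfl, ht.1.trans ht.2⟩ t ht, zero_sub, abs_neg, abs_of_nonneg ht.1]

lemma IsCurvGeRegion.dist_lineMap_le_s10 {U : Set X} (hU : IsCurvGeRegion U) {t s : ℝ}
    (hγ : IsUnitSpeedGeodesicOn γ t) (hη : IsUnitSpeedGeodesicOn η s) (hγη : γ 0 = η 0)
    (hγU : ∀ r ∈ Icc 0 t, γ r ∈ U) (hηU : ∀ r ∈ Icc 0 s, η r ∈ U)
    {xb yb zb : EuclideanSpace ℝ (Fin 2)} (hxy : dist xb yb = t) (hxz : dist xb zb = s)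
    (hyz : dist yb zb = dist (γ t) (η s)) {t' s' : ℝ} (ht' : t' ∈ Icc 0 t)
    (hs' : s' ∈ Icc 0 s) :
    dist (AffineMap.lineMap xb yb (t' / t)) (AffineMap.lineMap xb zb (s' / s)) ≤
      dist (γ t') (η s') := by
  have ht : t ∈ Icc 0 t := ⟨ht'.1.trans ht'.2, le_rfl⟩
  have hs : s ∈ Icc 0 s := ⟨hs'.1.trans hs'.2, le_rfl⟩
  have hdt := hγ.dist_zero ht
  have hds : dist (γ 0) (η s) = s := hγη ▸ hη.dist_zero hs
  obtain ⟨g, hg, hg0, hg1, hgU⟩ := hU.1 (γ t) (hγU t ht) (η s) (hηU s hs)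
  have hcomp := hU.2 (γ 0) (hγU 0 ⟨le_rfl, ht.1⟩) (γ t) (hγU t ht) (η s) (hηU s hs) ![γ, η, g]
    ?_ xb yb zb (hxy.trans hdt.symm) (hxz.trans hds.symm) hyz 0 1 t' s' ?_ ?_
  · simpa only [ge_iff_le, Matrix.cons_val_zero, Matrix.cons_val_one, hdt, hds] using hcomp
  · intro i
    fin_cases i
    · simpa only [Matrix.cons_val_zero, hdt] using ⟨hγ, rfl, rfl, hγU⟩
    · simpa only [Matrix.cons_val_one, Matrix.cons_val_zero, hds] using ⟨hη, hγη.symm, rfl, hηU⟩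
    · exact ⟨hg, hg0, hg1, hgU⟩
  · simpa only [Matrix.cons_val_zero, hdt] using ht'
  · simpa only [Matrix.cons_val_one, Matrix.cons_val_zero, hds] using hs'

lemma compAngle_le_compAngle_of_curvGe {U : Set X} (hU : IsCurvGeRegion U) {t s : ℝ}
    (hγ : IsUnitSpeedGeodesicOn γ t) (hη : IsUnitSpeedGeodesicOn η s) (hγη : γ 0 = η 0)
    (hγU : ∀ r ∈ Icc 0 t, γ r ∈ U) (hηU : ∀ r ∈ Icc 0 s, η r ∈ U) {t' s' : ℝ}
    (ht' : t' ∈ Ioc 0 t) (hs' : s' ∈ Ioc 0 s) :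
    compAngle (γ 0) (γ t) (η s) ≤ compAngle (γ 0) (γ t') (η s') := by
  have ht : 0 < t := ht'.1.trans_le ht'.2
  have hs : 0 < s := hs'.1.trans_le hs'.2
  have hdt := hγ.dist_zero ⟨ht.le, le_rfl⟩
  have hds : dist (γ 0) (η s) = s := hγη ▸ hη.dist_zero ⟨hs.le, le_rfl⟩
  have hdt' := hγ.dist_zero (Ioc_subset_Icc_self ht')
  have hds' : dist (γ 0) (η s') = s' := hγη ▸ hη.dist_zero (Ioc_subset_Icc_self hs')
  set c := dist (γ t) (η s)
  set D := dist (γ t') (η s')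
  obtain ⟨xb, yb, zb, hxy, hxz, hyz⟩ := exists_euclideanSpace_triangle (a := t) (b := s) (c := c)
    (hdt ▸ hds ▸ dist_triangle_left _ _ (γ 0)) (hdt ▸ hds ▸ dist_triangle _ (γ t) _)
    (hdt ▸ hds ▸ dist_triangle_right _ _ (η s))
  have hcomp := hU.dist_lineMap_le_s10 hγ hη hγη hγU hηU hxy hxz hyz (Ioc_subset_Icc_self ht')
    (Ioc_subset_Icc_self hs')
  have hcomp_sq := dist_lineMap_lineMap_sq xb yb zb (t' / t) (s' / s)
  rw [hxy, hxz, hyz] at hcomp_sq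
  have hcos : t' ^ 2 + s' ^ 2 - D ^ 2 ≤ t' * s' / (t * s) * (t ^ 2 + s ^ 2 - c ^ 2) := by
    have := pow_le_pow_left₀ dist_nonneg hcomp 2
    rw [hcomp_sq] at this
    field_simp at this ⊢
    linarith
  unfold compAngle
  rw [hdt, hds, hdt', hds']
  apply Real.arccos_le_arccos
  calc (t' ^ 2 + s' ^ 2 - D ^ 2) / (2 * t' * s')
      ≤ t' * s' / (t * s) * (t ^ 2 + s ^ 2 - c ^ 2) / (2 * t' * s') := by
        gcongr
        exact mul_nonneg (mul_nonneg zero_le_two ht'.1.le) hs'.1.le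
    _ = (t ^ 2 + s ^ 2 - c ^ 2) / (2 * t * s) := by
        field_simp [ht'.1.ne', hs'.1.ne']

end Geodesic

theorem angle_ge_compAngle_of_curvGe_general {X : Type*} [MetricSpace X]
    {U : Set X} (hU : IsCurvGeRegion U)
    {T S : ℝ}
    (γ η : ℝ → X)
    (hγ : IsUnitSpeedGeodesicOn γ T) (hη : IsUnitSpeedGeodesicOn η S)
    (hγη : γ 0 = η 0)
    (hγU : ∀ t ∈ Set.Icc (0:ℝ) T, γ t ∈ U)
    (hηU : ∀ s ∈ Set.Icc (0:ℝ) S, η s ∈ U) :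
    ∀ t ∈ Set.Ioc (0:ℝ) T, ∀ s ∈ Set.Ioc (0:ℝ) S,
      compAngle (γ 0) (γ t) (η s) ≤ upperAngle γ η := by
  intro t ht s hs
  have hbdd : IsBoundedUnder (· ≤ ·) ((𝓝[>] (0:ℝ)) ×ˢ (𝓝[>] (0:ℝ)))
      (fun ts : ℝ × ℝ => compAngle (γ 0) (γ ts.1) (η ts.2)) :=
    isBoundedUnder_of ⟨Real.pi, fun _ => Real.arccos_le_pi _⟩
  refine le_limsup_of_frequently_le (Eventually.frequently ?_) hbdd
  filter_upwards [prod_mem_prod (Ioc_mem_nhdsGT ht.1) (Ioc_mem_nhdsGT hs.1)] with ts hts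
  exact compAngle_le_compAngle_of_curvGe hU (hγ.mono_s10 ht.2) (hη.mono_s10 hs.2) hγη
    (fun r hr => hγU r ⟨hr.1, hr.2.trans ht.2⟩) (fun r hr => hηU r ⟨hr.1, hr.2.trans hs.2⟩)
    hts.1 hts.2

/-- Corollary 3.2, curvature `≥ 0` case: the angle is at least any
comparison angle. -/
theorem angle_ge_compAngle_of_curvGe {X : Type*} [MetricSpace X]
    {U : Set X} (hU : IsCurvGeRegion U)
    {T S : ℝ} (hT : 0 < T) (hS : 0 < S)
    (γ η : ℝ → X)
    (hγ : IsUnitSpeedGeodesicOn γ T) (hη : IsUnitSpeedGeodesicOn η S)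
    (hγη : γ 0 = η 0)
    (hγU : ∀ t ∈ Set.Icc (0:ℝ) T, γ t ∈ U)
    (hηU : ∀ s ∈ Set.Icc (0:ℝ) S, η s ∈ U) :
    ∀ t ∈ Set.Ioc (0:ℝ) T, ∀ s ∈ Set.Ioc (0:ℝ) S,
      compAngle (γ 0) (γ t) (η s) ≤ upperAngle γ η :=
  angle_ge_compAngle_of_curvGe_general hU γ η hγ hη hγη hγU hηU
end
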